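/- (Variant loss with powers.) Let α, β > 0, let Σ ⊆ X, and let δ, μ > 0 satisfy δ^α ≤ μ². Assume every f ∈ K admits g ∈ Σ ∩ K with ‖f − g‖_X ≤ δ. Let f ∈ K and w := λ(f). Suppose f̂ = ι(ĥ) with ĥ ∈ Y and ι(ĥ) ∈ Σ minimizes the loss L'_μ: ‖λ(ι(ĥ)) − w‖^α + μ‖ĥ‖_Y^β ≤ ‖λ(ι(h)) − w‖^α + μ‖h‖_Y^β for every h ∈ Y with ι(h) ∈ Σ. Then, with ε := max( C₀((1+μ)^{1/β} − 1), (μ² + μ)^{1/α} ), one has ‖f − f̂‖_X ≤ ε + 2 R(K(w, 2ε))_X. -/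

import Mathlib

/-!
Testing the minimality of `ĥ` against the element `g = ι h ∈ Σ ∩ K` with `‖f - g‖ ≤ δ` bounds the
loss of `ĥ` by `δ^α + μ ≤ μ² + μ`. Hence `‖λ(ι ĥ) - w‖ ≤ (μ² + μ)^{1/α} ≤ ε` and
`‖ĥ‖ ≤ (1 + μ)^{1/β}`, so pulling `ĥ` back to the unit ball of `Y` moves `ι ĥ` by at most
`C₀((1 + μ)^{1/β} - 1) ≤ ε`, onto a point `v ∈ K` with `‖λ(v) - w‖ ≤ 2ε`. Both `f` and `v` lie in
`K(w, 2ε)`, so `‖f - v‖ ≤ 2 R(K(w, 2ε))`.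
-/

/-- Chebyshev radius of a set `S` in a normed space `X`:
`R(S) = inf_{z ∈ X} sup_{f ∈ S} ‖f - z‖`. -/
noncomputable def chebRad {X : Type*} [NormedAddCommGroup X] (S : Set X) : ℝ :=
  ⨅ z : X, ⨆ f : S, ‖(f : X) - z‖

/-- Weighted euclidean norm on `ℝ^m`: `‖v‖ = ( m⁻¹ ∑ v_j² )^{1/2}`. -/
noncomputable def wNorm {m : ℕ} (v : Fin m → ℝ) : ℝ :=
  Real.sqrt ((∑ j, v j ^ 2) / m)

open Bornology

section wNorm

variable {m : ℕ}

lemma wNorm_nonneg (v : Fin m → ℝ) : 0 ≤ wNorm v := Real.sqrt_nonneg _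

lemma wNorm_eq_norm_div_sqrt (v : Fin m → ℝ) :
    wNorm v = ‖WithLp.toLp 2 v‖ / Real.sqrt m := by
  rw [wNorm, EuclideanSpace.norm_eq, Real.sqrt_div (by positivity)]
  simp [sq_abs]

lemma wNorm_add_le (v w : Fin m → ℝ) : wNorm (v + w) ≤ wNorm v + wNorm w := by
  simp only [wNorm_eq_norm_div_sqrt, ← add_div, WithLp.toLp_add]
  gcongr
  exact norm_add_le _ _

lemma wNorm_sub_le (a b c : Fin m → ℝ) :
    wNorm (fun j => a j - c j) ≤ wNorm (fun j => a j - b j) + wNorm (fun j => b j - c j) := by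
  convert wNorm_add_le (fun j => a j - b j) (fun j => b j - c j) using 2
  ext j
  simp

lemma wNorm_le_of_forall_abs_le {v : Fin m → ℝ} {C : ℝ} (hC : 0 ≤ C) (h : ∀ j, |v j| ≤ C) :
    wNorm v ≤ C := by
  have hsum : ∑ j, v j ^ 2 ≤ C ^ 2 * m := by
    calc ∑ j, v j ^ 2 ≤ ∑ _j : Fin m, C ^ 2 :=
          Finset.sum_le_sum fun j _ => sq_le_sq' (abs_le.1 (h j)).1 (abs_le.1 (h j)).2
      _ = C ^ 2 * m := by simp [mul_comm]
  calc wNorm v ≤ Real.sqrt (C ^ 2) :=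
        Real.sqrt_le_sqrt (div_le_of_le_mul₀ (by positivity) (by positivity) hsum)
    _ = C := Real.sqrt_sq hC

lemma wNorm_sub_le_norm_sub {X : Type*} [NormedAddCommGroup X] [NormedSpace ℝ X]
    {lam : Fin m → X →L[ℝ] ℝ} (hlam : ∀ j, ‖lam j‖ ≤ 1) (u v : X) :
    wNorm (fun j => lam j u - lam j v) ≤ ‖u - v‖ := by
  refine wNorm_le_of_forall_abs_le (norm_nonneg _) fun j => ?_
  rw [← map_sub, ← Real.norm_eq_abs]
  exact (lam j).le_of_opNorm_le (hlam j) _ |>.trans_eq (one_mul _)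

end wNorm

lemma norm_sub_le_two_mul_chebRad {X : Type*} [NormedAddCommGroup X] {S : Set X}
    (hS : IsBounded S) {x y : X} (hx : x ∈ S) (hy : y ∈ S) : ‖x - y‖ ≤ 2 * chebRad S := by
  suffices ‖x - y‖ / 2 ≤ chebRad S by linarith
  refine le_ciInf fun z => ?_
  have hbdd : BddAbove (Set.range fun u : S => ‖(u : X) - z‖) := by
    obtain ⟨r, hr⟩ := hS.subset_closedBall z
    exact ⟨r, by rintro _ ⟨u, rfl⟩; exact mem_closedBall_iff_norm.1 (hr u.2)⟩
  have hxz := le_ciSup hbdd ⟨x, hx⟩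
  have hyz := le_ciSup hbdd ⟨y, hy⟩
  have := norm_sub_le_norm_sub_add_norm_sub x z y
  rw [norm_sub_rev z y] at this
  dsimp only at hxz hyz
  linarith

lemma norm_sub_le_add_two_mul_chebRad {X : Type*} [NormedAddCommGroup X] [NormedSpace ℝ X]
    {m : ℕ} {lam : Fin m → X →L[ℝ] ℝ} (hlam : ∀ j, ‖lam j‖ ≤ 1) {K : Set X} (hK : IsBounded K)
    {f v x : X} {ε : ℝ} (hf : f ∈ K) (hv : v ∈ K) (hxv : ‖x - v‖ ≤ ε)
    (hx : wNorm (fun j => lam j x - lam j f) ≤ ε) :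
    ‖f - x‖ ≤ ε + 2 * chebRad {u ∈ K | wNorm (fun j => lam j u - lam j f) ≤ 2 * ε} := by
  have hε : 0 ≤ ε := (norm_nonneg _).trans hxv
  have hfT : f ∈ {u ∈ K | wNorm (fun j => lam j u - lam j f) ≤ 2 * ε} :=
    ⟨hf, by simpa [wNorm] using hε⟩
  have hvT : v ∈ {u ∈ K | wNorm (fun j => lam j u - lam j f) ≤ 2 * ε} := by
    refine ⟨hv, ?_⟩
    calc wNorm (fun j => lam j v - lam j f)
        ≤ wNorm (fun j => lam j v - lam j x) + wNorm (fun j => lam j x - lam j f) :=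
          wNorm_sub_le _ _ _
      _ ≤ ‖x - v‖ + ε := by
          gcongr
          exact (wNorm_sub_le_norm_sub hlam v x).trans_eq (norm_sub_rev _ _)
      _ ≤ 2 * ε := by linarith
  calc ‖f - x‖ ≤ ‖f - v‖ + ‖x - v‖ := by
        rw [norm_sub_rev x v]; exact norm_sub_le_norm_sub_add_norm_sub f v x
    _ ≤ 2 * chebRad _ + ε := add_le_add (norm_sub_le_two_mul_chebRad (hK.subset
          (Set.sep_subset _ _)) hfT hvT) hxv
    _ = _ := add_comm _ _

section boundedLinear

variable {X Y : Type*} [NormedAddCommGroup X] [NormedSpace ℝ X] [NormedAddCommGroup Y]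
  [NormedSpace ℝ Y] (ι : Y →ₗ[ℝ] X) {C₀ : ℝ}

lemma isBounded_image_closedBall_of_norm_le (hC₀ : ∀ g, ‖ι g‖ ≤ C₀ * ‖g‖) :
    IsBounded (ι '' {g : Y | ‖g‖ ≤ 1}) := by
  refine isBounded_iff_forall_norm_le.2 ⟨max C₀ 0, ?_⟩
  rintro _ ⟨g, hg, rfl⟩
  calc ‖ι g‖ ≤ C₀ * ‖g‖ := hC₀ g
    _ ≤ max C₀ 0 * ‖g‖ := by gcongr; exact le_max_left _ _
    _ ≤ max C₀ 0 * 1 := mul_le_mul_of_nonneg_left hg (le_max_right _ _)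
    _ = max C₀ 0 := mul_one _

-- `y'` is the radial projection of `y`; the `max 0` is for a negative `C₀`, possible only if `Y = 0`.
lemma exists_norm_le_one_norm_map_sub_le (hC₀ : ∀ g, ‖ι g‖ ≤ C₀ * ‖g‖) {y : Y} {r : ℝ}
    (hy : ‖y‖ ≤ r) : ∃ y' : Y, ‖y'‖ ≤ 1 ∧ ‖ι y - ι y'‖ ≤ max 0 (C₀ * (r - 1)) := by
  rcases le_or_gt ‖y‖ 1 with hy1 | hy1
  · exact ⟨y, hy1, by simp⟩
  have hpos : 0 < ‖y‖ := one_pos.trans hy1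
  have hC₀_nonneg : 0 ≤ C₀ := nonneg_of_mul_nonneg_left ((norm_nonneg _).trans (hC₀ y)) hpos
  refine ⟨‖y‖⁻¹ • y, by rw [norm_smul, norm_inv, norm_norm, inv_mul_cancel₀ hpos.ne'], ?_⟩
  have hdist : ‖y - ‖y‖⁻¹ • y‖ = ‖y‖ - 1 := by
    have hsmul : y - ‖y‖⁻¹ • y = (1 - ‖y‖⁻¹) • y := by rw [sub_smul, one_smul]
    rw [hsmul, norm_smul, Real.norm_of_nonneg (sub_nonneg.2 (inv_le_one_of_one_le₀
      hy1.le)), sub_mul, inv_mul_cancel₀ hpos.ne', one_mul]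
  calc ‖ι y - ι (‖y‖⁻¹ • y)‖ = ‖ι (y - ‖y‖⁻¹ • y)‖ := by rw [map_sub]
    _ ≤ C₀ * (‖y‖ - 1) := hdist ▸ hC₀ _
    _ ≤ C₀ * (r - 1) := by gcongr
    _ ≤ max 0 (C₀ * (r - 1)) := le_max_right _ _

end boundedLinear

theorem stmt_11_general
    {X Y : Type*} [NormedAddCommGroup X] [NormedSpace ℝ X]
    [NormedAddCommGroup Y] [NormedSpace ℝ Y]
    {m : ℕ}
    (lam : Fin m → X →L[ℝ] ℝ) (hlam : ∀ j, ‖lam j‖ ≤ 1)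
    (ι : Y →ₗ[ℝ] X)
    (C₀ : ℝ) (hC₀ : ∀ g : Y, ‖ι g‖ ≤ C₀ * ‖g‖)
    (α β : ℝ) (hα : 0 < α) (hβ : 0 < β)
    (Sig : Set X) (δ μ : ℝ) (hμ : 0 < μ) (hδμ : δ ^ α ≤ μ ^ 2)
    (happrox : ∀ f ∈ ι '' {g : Y | ‖g‖ ≤ 1},
      ∃ g ∈ Sig ∩ ι '' {g : Y | ‖g‖ ≤ 1}, ‖f - g‖ ≤ δ)
    (f : X) (hf : f ∈ ι '' {g : Y | ‖g‖ ≤ 1})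
    (fhat : Y)
    (hmin : ∀ h : Y, ι h ∈ Sig →
      wNorm (fun j => lam j (ι fhat) - lam j f) ^ α + μ * ‖fhat‖ ^ β ≤
        wNorm (fun j => lam j (ι h) - lam j f) ^ α + μ * ‖h‖ ^ β) :
    ‖f - ι fhat‖ ≤
      max (C₀ * ((1 + μ) ^ (1 / β) - 1)) ((μ ^ 2 + μ) ^ (1 / α)) +
      2 * chebRad {u ∈ ι '' {g : Y | ‖g‖ ≤ 1} |
        wNorm (fun j => lam j u - lam j f) ≤
          2 * max (C₀ * ((1 + μ) ^ (1 / β) - 1)) ((μ ^ 2 + μ) ^ (1 / α))} := by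
  set A := wNorm (fun j => lam j (ι fhat) - lam j f)
  obtain ⟨_, ⟨hgSig, h, hh, rfl⟩, hfg⟩ := happrox f hf
  have hloss : A ^ α + μ * ‖fhat‖ ^ β ≤ μ ^ 2 + μ := by
    have hdata : wNorm (fun j => lam j (ι h) - lam j f) ≤ δ :=
      (wNorm_sub_le_norm_sub hlam _ _).trans (norm_sub_rev (ι h) f ▸ hfg)
    have := Real.rpow_le_rpow (wNorm_nonneg _) hdata hα.le
    have := mul_le_of_le_one_right hμ.le (Real.rpow_le_one (norm_nonneg h) hh hβ.le)
    linarith [hmin h hgSig]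
  have hA_nonneg : 0 ≤ A ^ α := Real.rpow_nonneg (wNorm_nonneg _) α
  have hfhat_nonneg : 0 ≤ ‖fhat‖ ^ β := Real.rpow_nonneg (norm_nonneg fhat) β
  have hA : A ≤ (μ ^ 2 + μ) ^ (1 / α) := by
    rw [one_div, Real.le_rpow_inv_iff_of_pos (wNorm_nonneg _) (by positivity) hα]
    linarith [mul_nonneg hμ.le hfhat_nonneg]
  have hfhat : ‖fhat‖ ≤ (1 + μ) ^ (1 / β) := by
    rw [one_div, Real.le_rpow_inv_iff_of_pos (norm_nonneg _) (by positivity) hβ]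
    refine le_of_mul_le_mul_left ?_ hμ
    linarith
  obtain ⟨h', hh', hfhat_h'⟩ := exists_norm_le_one_norm_map_sub_le ι hC₀ hfhat
  have hε : 0 < (μ ^ 2 + μ) ^ (1 / α) := by positivity
  refine norm_sub_le_add_two_mul_chebRad hlam (isBounded_image_closedBall_of_norm_le ι hC₀) hf
    ⟨h', hh', rfl⟩ ?_ (hA.trans (le_max_right _ _))
  exact hfhat_h'.trans (max_le (hε.le.trans (le_max_right _ _)) (le_max_left _ _))

/-- Variant loss with powers: a minimizer of
`g ↦ ‖λ(g) − w‖^α + μ‖g‖_Y^β` over `Σ` satisfies, with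
`ε := max( C₀((1+μ)^{1/β} − 1), (μ²+μ)^{1/α} )`,
`‖f − f̂‖_X ≤ ε + 2 R(K(w, 2ε))_X`. -/
theorem stmt_11
    {X Y : Type*} [NormedAddCommGroup X] [NormedSpace ℝ X] [CompleteSpace X]
    [NormedAddCommGroup Y] [NormedSpace ℝ Y]
    {m : ℕ} (hm : 0 < m)
    (lam : Fin m → X →L[ℝ] ℝ) (hlam : ∀ j, ‖lam j‖ ≤ 1)
    (ι : Y →ₗ[ℝ] X) (hι : Function.Injective ι)
    (C₀ : ℝ) (hC₀ : ∀ g : Y, ‖ι g‖ ≤ C₀ * ‖g‖)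
    (hK : IsCompact (ι '' {g : Y | ‖g‖ ≤ 1}))
    (α β : ℝ) (hα : 0 < α) (hβ : 0 < β)
    (Sig : Set X) (δ μ : ℝ) (hδ : 0 < δ) (hμ : 0 < μ) (hδμ : δ ^ α ≤ μ ^ 2)
    (happrox : ∀ f ∈ ι '' {g : Y | ‖g‖ ≤ 1},
      ∃ g ∈ Sig ∩ ι '' {g : Y | ‖g‖ ≤ 1}, ‖f - g‖ ≤ δ)
    (f : X) (hf : f ∈ ι '' {g : Y | ‖g‖ ≤ 1})
    (fhat : Y) (hfhat : ι fhat ∈ Sig)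
    (hmin : ∀ h : Y, ι h ∈ Sig →
      wNorm (fun j => lam j (ι fhat) - lam j f) ^ α + μ * ‖fhat‖ ^ β ≤
        wNorm (fun j => lam j (ι h) - lam j f) ^ α + μ * ‖h‖ ^ β) :
    ‖f - ι fhat‖ ≤
      max (C₀ * ((1 + μ) ^ (1 / β) - 1)) ((μ ^ 2 + μ) ^ (1 / α)) +
      2 * chebRad {u ∈ ι '' {g : Y | ‖g‖ ≤ 1} |
        wNorm (fun j => lam j u - lam j f) ≤
          2 * max (C₀ * ((1 + μ) ^ (1 / β) - 1)) ((μ ^ 2 + μ) ^ (1 / α))} :=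
  stmt_11_general lam hlam ι C₀ hC₀ α β hα hβ Sig δ μ hμ hδμ happrox f hf fhat hmin
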